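/- Every treeish graph G satisfies td(G) = 0. -/

import Mathlib

/-- Add a new vertex to a graph `G`, joined to the vertices in the set `s`. -/
def addVertex {V : Type} (G : SimpleGraph V) (s : Set V) : SimpleGraph (Option V) where
  Adj a b :=
    match a, b with
    | some a, some b => G.Adj a b
    | some a, none => a ∈ s
    | none, some b => b ∈ s
    | none, none => False
  symm := ⟨by rintro (a | a) (b | b) h <;> simp_all <;> exact h.symm⟩
  loopless := ⟨by rintro (a | a) h <;> simp_all⟩

/-- Treeish graphs, defined recursively: an edge or a triangle is treeish; adding a
pendant vertex to a treeish graph is treeish; adding a new vertex adjacent to both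
endpoints of an existing edge of a treeish graph is treeish.  (Graphs are identified
up to isomorphism.) -/
inductive Treeish : {V : Type} → SimpleGraph V → Prop
  | edge : Treeish (⊤ : SimpleGraph (Fin 2))
  | triangle : Treeish (⊤ : SimpleGraph (Fin 3))
  | pendant {V : Type} {G : SimpleGraph V} (v : V) :
      Treeish G → Treeish (addVertex G {v})
  | triAdd {V : Type} {G : SimpleGraph V} {v w : V} (h : G.Adj v w) :
      Treeish G → Treeish (addVertex G {v, w})
  | iso {V W : Type} {G : SimpleGraph V} {H : SimpleGraph W} (e : G ≃g H) :
      Treeish G → Treeish H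

/-- Number of connected components of a graph. -/
noncomputable def numC {V : Type} (G : SimpleGraph V) : ℕ := Nat.card G.ConnectedComponent

/-- The (modified) type of a finite simple graph `G` with `n` vertices and `e` edges:
`type(G) = e - n + C(G) + Σ_v (C(G - v) - 1)`. -/
noncomputable def gtype {V : Type} (G : SimpleGraph V) : ℤ :=
  (Nat.card G.edgeSet : ℤ) - Nat.card V + numC G +
    ∑ᶠ v : V, ((numC (G.induce {v}ᶜ) : ℤ) - 1)

/-- The type defect of a finite simple graph: `td(G) = type(G) - (n - 2)`. -/
noncomputable def td {V : Type} (G : SimpleGraph V) : ℤ :=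
  gtype G - ((Nat.card V : ℤ) - 2)

/-! Both ways of growing a treeish graph add a vertex whose neighbourhood `s` is a nonempty
clique (a vertex or an edge) of a connected graph. This adds one vertex and `|s|` edges and keeps
the graph connected; deleting the new vertex gives back the old graph, and deleting an old
vertex `u` leaves the number of components unchanged unless `s = {u}`, when the new vertex
becomes isolated. Hence `td` changes by `|s| - 2 + [|s| = 1] = 0`. The edge and the triangle are
obtained in the same way from a single vertex, whose `td` is `0`. -/

open SimpleGraph Function

section

variable {V W : Type} {G : SimpleGraph V} {H : SimpleGraph W} {s : Set V}

lemma numC_congr (e : G ≃g H) : numC G = numC H :=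
  Nat.card_congr e.connectedComponentEquiv

lemma numC_eq_one_of_connected (hG : G.Connected) : numC G = 1 := by
  have := hG.preconnected.subsingleton_connectedComponent
  have := hG.nonempty
  exact Nat.card_unique

@[simp] lemma addVertex_adj_some_some {a b : V} :
    (addVertex G s).Adj (some a) (some b) ↔ G.Adj a b := Iff.rfl

@[simp] lemma addVertex_adj_some_none {a : V} : (addVertex G s).Adj (some a) none ↔ a ∈ s :=
  Iff.rfl

@[simp] lemma addVertex_adj_none_some {b : V} : (addVertex G s).Adj none (some b) ↔ b ∈ s :=
  Iff.rfl

@[simp] lemma not_addVertex_adj_none_none : ¬ (addVertex G s).Adj none none := id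

def addVertexEmbedding (G : SimpleGraph V) (s : Set V) : G ↪g addVertex G s where
  toFun := some
  inj' := Option.some_injective V
  map_rel_iff' := Iff.rfl

lemma addVertex_connected (hG : G.Connected) (hs : s.Nonempty) : (addVertex G s).Connected := by
  obtain ⟨a, ha⟩ := hs
  have reach_a : ∀ x, (addVertex G s).Reachable x (some a) := by
    rintro (_ | x)
    · exact (addVertex_adj_none_some.2 ha).reachable
    · exact (hG.preconnected x a).map (addVertexEmbedding G s).toHom
  exact (connected_iff_exists_forall_reachable _).2 ⟨some a, fun x => (reach_a x).symm⟩

-- Retract the new vertex onto `a`: adjacent vertices of `addVertex G s` go to reachable ones.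
lemma reachable_of_addVertex_reachable {a x y : V} (ha : ∀ z ∈ s, G.Reachable z a)
    (h : (addVertex G s).Reachable (some x) (some y)) : G.Reachable x y := by
  have adj : ∀ o o', (addVertex G s).Adj o o' → G.Reachable (o.getD a) (o'.getD a) := by
    rintro (_ | z) (_ | z') hadj
    · exact absurd hadj not_addVertex_adj_none_none
    · exact (ha z' hadj).symm
    · exact ha z hadj
    · exact Adj.reachable hadj
  have walk : ∀ {o o'} (p : (addVertex G s).Walk o o'), G.Reachable (o.getD a) (o'.getD a) := by
    intro o o' p
    induction p with
    | nil => rfl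
    | cons hadj _ ih => exact (adj _ _ hadj).trans ih
  exact h.elim walk

lemma injective_map_addVertexEmbedding (hs : ∀ x ∈ s, ∀ y ∈ s, G.Reachable x y) :
    Injective (ConnectedComponent.map (addVertexEmbedding G s).toHom) := by
  refine ConnectedComponent.ind₂ fun x y hxy => ?_
  simp only [ConnectedComponent.map_mk, ConnectedComponent.eq] at hxy ⊢
  obtain rfl | ⟨a, ha⟩ := s.eq_empty_or_nonempty
  · exact reachable_of_addVertex_reachable (a := x) (fun _ h => h.elim) hxy
  · exact reachable_of_addVertex_reachable (fun z hz => hs z hz a ha) hxy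

lemma numC_addVertex_of_nonempty (hs : ∀ x ∈ s, ∀ y ∈ s, G.Reachable x y)
    (hne : s.Nonempty) :
    numC (addVertex G s) = numC G := by
  obtain ⟨a, ha⟩ := hne
  refine (Nat.card_congr (Equiv.ofBijective _ ⟨injective_map_addVertexEmbedding hs, ?_⟩)).symm
  refine ConnectedComponent.ind ?_
  rintro (_ | x)
  · exact ⟨G.connectedComponentMk a,
      ConnectedComponent.sound (addVertex_adj_some_none.2 ha).reachable⟩
  · exact ⟨G.connectedComponentMk x, rfl⟩

lemma numC_addVertex_empty [Finite V] : numC (addVertex G ∅) = numC G + 1 := by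
  have no_adj : ∀ o, ¬ (addVertex G ∅).Adj none o := by
    rintro (_ | z) hadj <;> exact hadj
  have isolated : ∀ x, ¬ (addVertex G ∅).Reachable none (some x) := by
    rintro x ⟨_ | ⟨hadj, _⟩⟩
    exact no_adj _ hadj
  let f : Option G.ConnectedComponent → (addVertex G ∅).ConnectedComponent :=
    fun c => c.elim ((addVertex G ∅).connectedComponentMk none)
      (ConnectedComponent.map (addVertexEmbedding G ∅).toHom)
  have hf : Bijective f := by
    refine ⟨?_, ?_⟩
    · rintro (_ | c) (_ | c') h
      · rfl
      · induction c' using ConnectedComponent.ind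
        exact absurd (ConnectedComponent.exact h) (isolated _)
      · induction c using ConnectedComponent.ind
        exact absurd (ConnectedComponent.exact h).symm (isolated _)
      · exact congrArg some (injective_map_addVertexEmbedding (by simp) h)
    · refine ConnectedComponent.ind ?_
      rintro (_ | x)
      · exact ⟨none, rfl⟩
      · exact ⟨some (G.connectedComponentMk x), rfl⟩
  rw [numC, numC, ← Nat.card_congr (Equiv.ofBijective f hf), Finite.card_option]

lemma numC_induce_compl_none : numC ((addVertex G s).induce {none}ᶜ) = numC G := by
  rw [← Set.compl_range_some, compl_compl]
  exact (numC_congr (addVertexEmbedding G s).isoInduceRange).symm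

def induceComplSomeIso (G : SimpleGraph V) (s : Set V) (u : V) :
    (addVertex G s).induce {some u}ᶜ ≃g addVertex (G.induce {u}ᶜ) (Subtype.val ⁻¹' s) where
  toFun
    | ⟨some a, h⟩ => some ⟨a, fun h' => h (congrArg some h')⟩
    | ⟨none, _⟩ => none
  invFun
    | some ⟨a, h⟩ => ⟨some a, fun h' => h (Option.some_injective _ h')⟩
    | none => ⟨none, by simp⟩
  left_inv := by rintro ⟨_ | a, h⟩ <;> rfl
  right_inv := by rintro (_ | ⟨a, h⟩) <;> rfl
  map_rel_iff' := by rintro ⟨_ | a, ha⟩ ⟨_ | b, hb⟩ <;> exact Iff.rfl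

lemma SimpleGraph.IsClique.reachable (hs : G.IsClique s) {x y : V} (hx : x ∈ s) (hy : y ∈ s) :
    G.Reachable x y := by
  obtain rfl | hxy := eq_or_ne x y
  · rfl
  · exact (hs hx hy hxy).reachable

lemma numC_induce_compl_some_of_subset [Finite V] {u : V} (hsu : s ⊆ {u}) :
    numC ((addVertex G s).induce {some u}ᶜ) = numC (G.induce {u}ᶜ) + 1 := by
  have hempty : Subtype.val ⁻¹' s = (∅ : Set ({u}ᶜ : Set V)) :=
    Set.eq_empty_of_forall_notMem fun x hx => x.2 (hsu hx)
  rw [numC_congr (induceComplSomeIso G s u), hempty, numC_addVertex_empty]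

lemma numC_induce_compl_some_of_not_subset (hs : G.IsClique s) {u : V} (hsu : ¬ s ⊆ {u}) :
    numC ((addVertex G s).induce {some u}ᶜ) = numC (G.induce {u}ᶜ) := by
  obtain ⟨a, ha, hau⟩ := Set.not_subset.1 hsu
  have hclique : (G.induce {u}ᶜ).IsClique (Subtype.val ⁻¹' s) :=
    fun _ hx _ hy hxy => hs hx hy (Subtype.val_injective.ne hxy)
  rw [numC_congr (induceComplSomeIso G s u),
    numC_addVertex_of_nonempty (fun x hx y hy => hclique.reachable hx hy) ⟨⟨a, hau⟩, ha⟩]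

def addVertexEdgeMap (G : SimpleGraph V) (s : Set V) :
    G.edgeSet ⊕ s → (addVertex G s).edgeSet :=
  Sum.elim (addVertexEmbedding G s).mapEdgeSet fun a => ⟨s(none, some a.1), a.2⟩

lemma addVertexEdgeMap_bijective : Bijective (addVertexEdgeMap G s) := by
  refine ⟨(addVertexEmbedding G s).mapEdgeSet.injective.sumElim ?_ ?_, ?_⟩
  · rintro ⟨a, ha⟩ ⟨b, hb⟩ h
    simpa [Sym2.eq_iff] using congrArg Subtype.val h
  · rintro e a h
    have hnone : none ∈ Sym2.map some e.1 := by
      rw [show Sym2.map some e.1 = s(none, some a.1) from congrArg Subtype.val h]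
      exact Sym2.mem_mk_left _ _
    obtain ⟨x, -, hx⟩ := Sym2.mem_map.1 hnone
    exact Option.some_ne_none x hx
  · rintro ⟨e, he⟩
    induction e with
    | h x y =>
      match x, y with
      | some x, some y => exact ⟨Sum.inl ⟨s(x, y), he⟩, rfl⟩
      | some x, none => exact ⟨Sum.inr ⟨x, he⟩, Subtype.ext Sym2.eq_swap⟩
      | none, some y => exact ⟨Sum.inr ⟨y, he⟩, rfl⟩
      | none, none => exact (not_addVertex_adj_none_none (G := G) (s := s) he).elim

lemma card_edgeSet_addVertex [Finite V] :
    Nat.card (addVertex G s).edgeSet = Nat.card G.edgeSet + Nat.card s := by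
  rw [← Nat.card_congr (Equiv.ofBijective _ addVertexEdgeMap_bijective), Nat.card_sum]

lemma td_congr (e : G ≃g H) : td G = td H := by
  have hdel (v : V) : numC (G.induce {v}ᶜ) = numC (H.induce {e v}ᶜ) :=
    numC_congr (e.induce ((Set.bijOn_singleton.2 rfl).compl e.bijective))
  simp only [td, gtype, hdel, numC_congr e, Nat.card_congr e.toEquiv,
    Nat.card_congr e.mapEdgeSet]
  rw [← finsum_comp_equiv e.toEquiv]
  rfl

lemma td_addVertex [Finite V] (hG : G.Connected) (hs : s.Nonempty) :
    td (addVertex G s) = td G + Nat.card s - 2 +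
      ∑ᶠ u, ((numC ((addVertex G s).induce {some u}ᶜ) : ℤ) - numC (G.induce {u}ᶜ)) := by
  have := Fintype.ofFinite V
  simp only [td, gtype, finsum_eq_sum_of_fintype, Fintype.sum_option, card_edgeSet_addVertex,
    Finite.card_option, numC_induce_compl_none, numC_eq_one_of_connected hG,
    numC_eq_one_of_connected (addVertex_connected hG hs), Finset.sum_sub_distrib]
  push_cast
  ring

lemma td_addVertex_singleton [Finite V] (hG : G.Connected) (v : V) :
    td (addVertex G {v}) = td G := by
  have hsum : ∑ᶠ u, ((numC ((addVertex G {v}).induce {some u}ᶜ) : ℤ) -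
      numC (G.induce {u}ᶜ)) = 1 := by
    rw [finsum_eq_single _ v fun u hu => ?_, numC_induce_compl_some_of_subset subset_rfl]
    · push_cast
      ring
    · rw [numC_induce_compl_some_of_not_subset (isClique_singleton v) (by simpa using hu.symm),
        sub_self]
  rw [td_addVertex hG (Set.singleton_nonempty v), hsum, Nat.card_unique]
  push_cast
  ring

lemma td_addVertex_pair [Finite V] (hG : G.Connected) {v w : V} (hvw : G.Adj v w) :
    td (addVertex G {v, w}) = td G := by
  have hsum : ∑ᶠ u, ((numC ((addVertex G {v, w}).induce {some u}ᶜ) : ℤ) -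
      numC (G.induce {u}ᶜ)) = 0 := by
    refine finsum_eq_zero_of_forall_eq_zero fun u => ?_
    have hsub : ¬ ({v, w} : Set V) ⊆ {u} := fun h =>
      hvw.ne ((h (.inl rfl) : v = u).trans (h (.inr rfl) : w = u).symm)
    rw [numC_induce_compl_some_of_not_subset (isClique_pair.2 fun _ => hvw) hsub, sub_self]
  rw [td_addVertex hG (Set.insert_nonempty v {w}), hsum, Nat.card_coe_set_eq,
    Set.ncard_pair hvw.ne]
  ring

lemma td_of_unique [Unique V] : td G = 0 := by
  have hE : G.edgeSet = ∅ := Set.eq_empty_of_forall_notMem fun e he => by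
    induction e with
    | h x y => exact (G.ne_of_adj he) (Subsingleton.elim x y)
  have hdel (v : V) : numC (G.induce {v}ᶜ) = 0 := by
    have : IsEmpty ({v}ᶜ : Set V) := ⟨fun x => x.2 (Subsingleton.elim _ _)⟩
    exact Nat.card_of_isEmpty
  have hC : numC G = 1 := Nat.card_unique
  simp [td, gtype, hE, hdel, hC, finsum_unique]

lemma addVertex_top_univ : addVertex (⊤ : SimpleGraph V) Set.univ = ⊤ := by
  ext (_ | a) (_ | b) <;> simp

lemma td_top_fin_two : td (⊤ : SimpleGraph (Fin 2)) = 0 := by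
  have e : (⊤ : SimpleGraph (Fin 2)) ≃g addVertex (⊤ : SimpleGraph (Fin 1)) {0} := by
    rw [show ({0} : Set (Fin 1)) = Set.univ from Set.eq_univ_of_forall (Fin.forall_fin_one.2 rfl),
      addVertex_top_univ]
    exact Iso.completeGraph (finSuccEquiv 1)
  rw [td_congr e, td_addVertex_singleton connected_top, td_of_unique]

lemma td_top_fin_three : td (⊤ : SimpleGraph (Fin 3)) = 0 := by
  have e : (⊤ : SimpleGraph (Fin 3)) ≃g addVertex (⊤ : SimpleGraph (Fin 2)) {0, 1} := by
    rw [show ({0, 1} : Set (Fin 2)) = Set.univ from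
      Set.eq_univ_of_forall (Fin.forall_fin_two.2 ⟨.inl rfl, .inr rfl⟩), addVertex_top_univ]
    exact Iso.completeGraph (finSuccEquiv 2)
  rw [td_congr e, td_addVertex_pair connected_top ((top_adj _ _).2 zero_ne_one), td_top_fin_two]

lemma Treeish.finite (hG : Treeish G) : Finite V := by
  induction hG with
  | edge | triangle => infer_instance
  | pendant _ _ ih | triAdd _ _ ih => infer_instance
  | iso e _ ih => exact Finite.of_equiv _ e.toEquiv

lemma Treeish.connected (hG : Treeish G) : G.Connected := by
  induction hG with
  | edge | triangle => exact connected_top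
  | pendant v _ ih => exact addVertex_connected ih (Set.singleton_nonempty v)
  | triAdd _ _ ih => exact addVertex_connected ih (Set.insert_nonempty _ _)
  | iso e _ ih => exact e.connected_iff.1 ih

end

/-- Every treeish graph `G` satisfies `td(G) = 0`. -/
theorem td_treeish {V : Type} (G : SimpleGraph V) (hG : Treeish G) : td G = 0 := by
  induction hG with
  | edge => exact td_top_fin_two
  | triangle => exact td_top_fin_three
  | pendant v hG ih =>
    have := hG.finite
    rw [td_addVertex_singleton hG.connected, ih]
  | triAdd hvw hG ih =>
    have := hG.finite
    rw [td_addVertex_pair hG.connected hvw, ih]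
  | iso e _ ih => rw [← td_congr e, ih]
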